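/- Let c ∈ (0,1) and set θ* = log(c/(1−c)). Then for any η ∈ [0,1] and any f ∈ ℝ, the conditional cost-sensitive regret of the thresholded prediction sgn(f − θ*) is bounded by the conditional logistic regret: r_c(η, sgn(f − θ*)) ≤ sqrt(r_log(η,f)/2). -/

import Mathlib

/-- Sign function with the convention sgn(0) = 1. -/
noncomputable def sgn (x : ℝ) : ℝ := if 0 ≤ x then 1 else -1

/-- Conditional cost-sensitive classification loss
    ℓ_c(η,h) = c(1−η)·1[h=1] + (1−c)η·1[h=−1]. -/
noncomputable def condCostLoss (c η h : ℝ) : ℝ :=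
  c * (1 - η) * (if h = 1 then 1 else 0) + (1 - c) * η * (if h = -1 then 1 else 0)

/-- Conditional cost-sensitive regret:
    r_c(η,h) = ℓ_c(η,h) − min_{h'∈{−1,1}} ℓ_c(η,h'). -/
noncomputable def condCostRegret (c η h : ℝ) : ℝ :=
  condCostLoss c η h - min (condCostLoss c η 1) (condCostLoss c η (-1))

/-- Conditional logistic loss ℓ_log(η,f) = (1−η)·log(1+e^f) + η·log(1+e^{−f}). -/
noncomputable def condLogLoss (η f : ℝ) : ℝ :=
  (1 - η) * Real.log (1 + Real.exp f) + η * Real.log (1 + Real.exp (-f))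

/-- Conditional logistic regret r_log(η,f) = ℓ_log(η,f) − inf_{f'} ℓ_log(η,f'). -/
noncomputable def condLogRegret (η f : ℝ) : ℝ :=
  condLogLoss η f - ⨅ f' : ℝ, condLogLoss η f'

/-!
Put `p = σ(f)` with `σ` the logistic sigmoid. Since `σ(θ*) = c`, the prediction `sgn(f − θ*)`
equals `sgn(p − c)`; it can differ from the Bayes prediction `sgn(η − c)` only when `c` lies
between `η` and `p`, and then its cost regret `|η − c|` is at most `|η − p|`. The logistic loss is
the cross-entropy of `Bernoulli η` against `Bernoulli p` and its infimum is at most the binary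
entropy of `η`, so the logistic regret is at least `KL(η ‖ p) ≥ 2 (η − p)²` by Pinsker's
inequality.
-/

open Real Set Filter Topology

theorem monotoneOn_log_sub_log_one_sub_sub_four_mul :
    MonotoneOn (fun x ↦ log x - log (1 - x) - 4 * x) (Ioo 0 1) := by
  refine monotoneOn_of_hasDerivWithinAt_nonneg (f' := fun x ↦ x⁻¹ + (1 - x)⁻¹ - 4)
    (convex_Ioo 0 1) ?_ (fun x hx ↦ ?_) (fun x hx ↦ ?_)
  · refine ContinuousOn.sub (ContinuousOn.sub ?_ ?_) (by fun_prop)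
    · exact continuousOn_log.mono fun x hx ↦ hx.1.ne'
    · exact continuousOn_log.comp (continuousOn_const.sub continuousOn_id) fun x hx ↦
        (sub_pos.2 hx.2).ne'
  all_goals obtain ⟨hx0, hx1⟩ : x ∈ Ioo 0 1 := by rwa [interior_Ioo] at hx
  · have hlog1 : HasDerivAt (fun x ↦ log (1 - x)) (-(1 - x)⁻¹) x := by
      simpa [div_eq_mul_inv] using ((hasDerivAt_id x).const_sub 1).log (sub_pos.2 hx1).ne'
    exact (((hasDerivAt_log hx0.ne').sub hlog1).sub ((hasDerivAt_id x).const_mul 4))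
      |>.hasDerivWithinAt.congr_deriv (by ring)
  · have h1x : 0 < 1 - x := sub_pos.2 hx1
    have : x⁻¹ + (1 - x)⁻¹ - 4 = (1 - 2 * x) ^ 2 / (x * (1 - x)) := by field_simp; ring
    rw [this]
    positivity

/-- Pinsker's inequality for Bernoulli distributions. -/
theorem binEntropy_add_two_mul_sq_le {η p : ℝ} (hη0 : 0 ≤ η) (hη1 : η ≤ 1) (hp0 : 0 < p)
    (hp1 : p < 1) : binEntropy η + 2 * (η - p) ^ 2 ≤ -(η * log p + (1 - η) * log (1 - p)) := by
  -- The gap, as a function of `η`, vanishes at `p` and has derivative `φ η - φ p` with `φ` monotone.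
  set φ : ℝ → ℝ := fun x ↦ log x - log (1 - x) - 4 * x
  set G : ℝ → ℝ := fun x ↦
    -(x * log p + (1 - x) * log (1 - p)) - binEntropy x - 2 * (x - p) ^ 2
  have hGp : G p = 0 := by simp [G, binEntropy, log_inv]; ring
  have hGc : Continuous G := by fun_prop
  have hG' : ∀ x ∈ Ioo (0 : ℝ) 1, HasDerivAt G (φ x - φ p) x := by
    intro x ⟨hx0, hx1⟩
    have hce := (((hasDerivAt_id x).mul_const (log p)).add
      (((hasDerivAt_id x).const_sub 1).mul_const (log (1 - p)))).neg
    have hsq := (((hasDerivAt_id x).sub_const p).pow 2).const_mul 2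
    exact ((hce.sub (hasDerivAt_binEntropy hx0.ne' (by linarith))).sub hsq).congr_deriv
      (by simp [φ]; ring)
  suffices G p ≤ G η by rw [hGp] at this; linarith
  rcases le_total p η with h | h
  · refine monotoneOn_of_hasDerivWithinAt_nonneg (f' := fun x ↦ φ x - φ p) (convex_Icc p η)
      hGc.continuousOn (fun x hx ↦ ?_) (fun x hx ↦ ?_) (left_mem_Icc.2 h) (right_mem_Icc.2 h) h
    all_goals rw [interior_Icc] at hx
    · exact (hG' x ⟨hp0.trans hx.1, hx.2.trans_le hη1⟩).hasDerivWithinAt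
    · exact sub_nonneg.2 (monotoneOn_log_sub_log_one_sub_sub_four_mul ⟨hp0, hp1⟩
        ⟨hp0.trans hx.1, hx.2.trans_le hη1⟩ hx.1.le)
  · refine antitoneOn_of_hasDerivWithinAt_nonpos (f' := fun x ↦ φ x - φ p) (convex_Icc η p)
      hGc.continuousOn (fun x hx ↦ ?_) (fun x hx ↦ ?_) (left_mem_Icc.2 h) (right_mem_Icc.2 h) h
    all_goals rw [interior_Icc] at hx
    · exact (hG' x ⟨hη0.trans_lt hx.1, hx.2.trans hp1⟩).hasDerivWithinAt
    · exact sub_nonpos.2 (monotoneOn_log_sub_log_one_sub_sub_four_mul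
        ⟨hη0.trans_lt hx.1, hx.2.trans hp1⟩ ⟨hp0, hp1⟩ hx.2.le)

theorem sigmoid_log_div_one_sub {p : ℝ} (hp0 : 0 < p) (hp1 : p < 1) :
    sigmoid (log (p / (1 - p))) = p := by
  have h1p : 0 < 1 - p := sub_pos.2 hp1
  rw [sigmoid_def, exp_neg, exp_log (div_pos hp0 h1p)]
  field_simp
  ring

theorem condLogLoss_eq_crossEntropy (η f : ℝ) :
    condLogLoss η f = -(η * log (sigmoid f) + (1 - η) * log (1 - sigmoid f)) := by
  rw [← sigmoid_neg, sigmoid_def, sigmoid_def, log_inv, log_inv, neg_neg, condLogLoss]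
  ring

theorem condLogLoss_one_sub (η f : ℝ) : condLogLoss (1 - η) f = condLogLoss η (-f) := by
  rw [condLogLoss, condLogLoss, neg_neg]
  ring

theorem condLogLoss_nonneg {η : ℝ} (hη0 : 0 ≤ η) (hη1 : η ≤ 1) (f : ℝ) :
    0 ≤ condLogLoss η f := by
  have hlog (x : ℝ) : 0 ≤ log (1 + exp x) := log_nonneg (by linarith [exp_pos x])
  exact add_nonneg (mul_nonneg (sub_nonneg.2 hη1) (hlog f)) (mul_nonneg hη0 (hlog (-f)))

theorem bddBelow_range_condLogLoss {η : ℝ} (hη0 : 0 ≤ η) (hη1 : η ≤ 1) :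
    BddBelow (range (condLogLoss η)) :=
  ⟨0, by rintro _ ⟨f, rfl⟩; exact condLogLoss_nonneg hη0 hη1 f⟩

theorem iInf_condLogLoss_zero_le : ⨅ f, condLogLoss 0 f ≤ 0 := by
  have hlim : Tendsto (condLogLoss 0) atBot (𝓝 0) := by
    have h : condLogLoss 0 = log ∘ fun f ↦ 1 + exp f := by ext f; simp [condLogLoss]
    rw [h]
    simpa using (continuousAt_log (by norm_num : (1 + 0 : ℝ) ≠ 0)).tendsto.comp
      (tendsto_exp_atBot.const_add 1)
  exact ge_of_tendsto' hlim fun f ↦ ciInf_le (bddBelow_range_condLogLoss le_rfl zero_le_one) f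

theorem iInf_condLogLoss_le_binEntropy {η : ℝ} (hη0 : 0 ≤ η) (hη1 : η ≤ 1) :
    ⨅ f, condLogLoss η f ≤ binEntropy η := by
  rcases hη0.eq_or_lt with rfl | hη0
  · simpa using iInf_condLogLoss_zero_le
  rcases hη1.eq_or_lt with rfl | hη1
  · have h : ⨅ f, condLogLoss 1 f = ⨅ f, condLogLoss 0 f := by
      have h1 (f : ℝ) : condLogLoss 1 f = condLogLoss 0 (-f) := by
        simpa using condLogLoss_one_sub 0 f
      simp only [h1]
      exact (Equiv.neg ℝ).iInf_comp
    simpa [h] using iInf_condLogLoss_zero_le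
  calc ⨅ f, condLogLoss η f ≤ condLogLoss η (log (η / (1 - η))) :=
        ciInf_le (bddBelow_range_condLogLoss hη0.le hη1.le) _
    _ = binEntropy η := by
        rw [condLogLoss_eq_crossEntropy, sigmoid_log_div_one_sub hη0 hη1, binEntropy, log_inv,
          log_inv]
        ring

theorem two_mul_sq_le_condLogRegret {η : ℝ} (hη0 : 0 ≤ η) (hη1 : η ≤ 1) (f : ℝ) :
    2 * (η - sigmoid f) ^ 2 ≤ condLogRegret η f := by
  have := binEntropy_add_two_mul_sq_le hη0 hη1 (sigmoid_pos f) (sigmoid_lt_one f)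
  rw [condLogRegret, condLogLoss_eq_crossEntropy]
  linarith [iInf_condLogLoss_le_binEntropy hη0 hη1]

theorem condCostRegret_one (c η : ℝ) : condCostRegret c η 1 = max (c - η) 0 := by
  norm_num [condCostRegret, condCostLoss]
  rw [min_def, max_def]
  split_ifs <;> linarith

theorem condCostRegret_neg_one (c η : ℝ) : condCostRegret c η (-1) = max (η - c) 0 := by
  norm_num [condCostRegret, condCostLoss]
  rw [min_def, max_def]
  split_ifs <;> linarith

theorem condCostRegret_sgn_sub_le (c η p : ℝ) : condCostRegret c η (sgn (p - c)) ≤ |η - p| := by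
  rw [sgn]
  split_ifs
  · rw [condCostRegret_one]
    exact max_le (by linarith [neg_abs_le (η - p)]) (abs_nonneg _)
  · rw [condCostRegret_neg_one]
    exact max_le (by linarith [le_abs_self (η - p)]) (abs_nonneg _)

theorem sgn_sub_log_div_one_sub {c : ℝ} (hc0 : 0 < c) (hc1 : c < 1) (f : ℝ) :
    sgn (f - log (c / (1 - c))) = sgn (sigmoid f - c) := by
  conv_rhs => rw [← sigmoid_log_div_one_sub hc0 hc1]
  simp only [sgn, sub_nonneg, sigmoid_le_iff]

/-- For c ∈ (0,1) and θ* = log(c/(1−c)), the conditional cost-sensitive regret of the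
    thresholded prediction sgn(f − θ*) is at most sqrt(r_log(η,f)/2). -/
theorem condCostRegret_le_sqrt_condLogRegret (c : ℝ) (hc : 0 < c ∧ c < 1)
    (η : ℝ) (hη : 0 ≤ η ∧ η ≤ 1) (f : ℝ) :
    condCostRegret c η (sgn (f - Real.log (c / (1 - c)))) ≤
      Real.sqrt (condLogRegret η f / 2) := by
  obtain ⟨hc0, hc1⟩ := hc
  obtain ⟨hη0, hη1⟩ := hη
  rw [sgn_sub_log_div_one_sub hc0 hc1]
  calc condCostRegret c η (sgn (sigmoid f - c)) ≤ |η - sigmoid f| := condCostRegret_sgn_sub_le ..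
    _ = √((η - sigmoid f) ^ 2) := (sqrt_sq_eq_abs _).symm
    _ ≤ √(condLogRegret η f / 2) :=
        sqrt_le_sqrt (by linarith [two_mul_sq_le_condLogRegret hη0 hη1 f])
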